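/- arXiv:math/0607643 — 2 statements merged into one kernel-verified Lean document; each statement's English description precedes it below -/
import Mathlib

section
/- For every t ∈ [−1, 1], the point z = (1/2, it/2, 0, …, 0) ∈ ℂⁿ (n ≥ 2) satisfies |z₁|² + ⋯ + |z_n|² + |z₁² + ⋯ + z_n²| = 1/2. Consequently, the boundary of the set K_ρ = { z ∈ ℂⁿ : |z₁|² + ⋯ + |z_n|² + |z₁² + ⋯ + z_n²| ≤ 1/2 } contains the nondegenerate segment { (1/2, it/2, 0, …, 0) : t ∈ [−1, 1] }, so K_ρ is not strictly convex. -/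
/-!
Both terms of `∑ |z_j|² + |∑ z_j²|` are homogeneous of degree two under real scaling, so on the
ray through a point `z` of the level set `{… = 1/2}` the function takes the value `c² / 2`. The
points `c z` with `c > 1` lie outside `K_ρ` and tend to `z`, hence `z` lies on the frontier. For
`z = (1/2, it/2, 0, …, 0)` the value is `1/4 + t²/4 + |1 - t²|/4`, which is `1/2` exactly when
`|t| ≤ 1`.
-/

open Complex Set Topology Filter

theorem mem_frontier_setOf_le_of_lt_smul {E : Type*} [TopologicalSpace E] [AddCommGroup E]
    [Module ℝ E] [ContinuousSMul ℝ E] {f : E → ℝ} {x : E} {a : ℝ} (hx : f x = a)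
    (hray : ∀ c : ℝ, 1 < c → a < f (c • x)) : x ∈ frontier {z | f z ≤ a} := by
  rw [frontier_eq_closure_inter_closure]
  refine ⟨subset_closure hx.le, ?_⟩
  have hlim : Tendsto (fun c : ℝ => c • x) (𝓝[>] 1) (𝓝 x) := by
    have hray_cont : Continuous fun c : ℝ => c • x := continuous_id.smul continuous_const
    simpa using (hray_cont.tendsto 1).mono_left nhdsWithin_le_nhds
  exact mem_closure_of_tendsto hlim
    (eventually_nhdsWithin_of_forall fun c hc => not_le.mpr (hray c hc))

noncomputable def robinIndicatrixFn {ι : Type*} [Fintype ι] (z : ι → ℂ) : ℝ :=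
  ∑ j, ‖z j‖ ^ 2 + ‖∑ j, z j ^ 2‖

theorem robinIndicatrixFn_smul {ι : Type*} [Fintype ι] (c : ℝ) (z : ι → ℂ) :
    robinIndicatrixFn (c • z) = c ^ 2 * robinIndicatrixFn z := by
  simp only [robinIndicatrixFn, Pi.smul_apply, smul_pow, ← Finset.smul_sum, norm_smul, mul_pow,
    ← Finset.mul_sum, norm_pow, Real.norm_eq_abs, sq_abs, mul_add]

theorem Fin.sum_ite_zero_one {M N : Type*} [Zero M] [AddCommMonoid N] {n : ℕ} (g : M → N)
    (hg : g 0 = 0) (a b : M) :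
    ∑ j : Fin (n + 2), g (if j = 0 then a else if j = 1 then b else 0) = g a + g b := by
  simp [Fin.sum_univ_succ, Fin.succ_ne_zero, Fin.succ_succ_ne_one, hg]

theorem robinIndicatrixFn_segment (n : ℕ) {t : ℝ} (ht : t ∈ Icc (-1 : ℝ) 1) :
    robinIndicatrixFn (fun j : Fin (n + 2) =>
      if j = 0 then (1/2 : ℂ) else if j = 1 then I * t / 2 else 0) = 1 / 2 := by
  have hsq : (1 / 2 : ℂ) ^ 2 + (I * t / 2) ^ 2 = ((1 - t ^ 2) / 4 : ℝ) := by
    push_cast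
    linear_combination (t : ℂ) ^ 2 / 4 * I_sq
  have ht2 : 0 ≤ 1 - t ^ 2 := by nlinarith [ht.1, ht.2]
  simp only [robinIndicatrixFn, Fin.sum_ite_zero_one (fun w : ℂ => ‖w‖ ^ 2) (by simp),
    Fin.sum_ite_zero_one (fun w : ℂ => w ^ 2) (by simp), hsq, norm_real, Real.norm_eq_abs,
    abs_of_nonneg (div_nonneg ht2 zero_le_four)]
  simp only [one_div, norm_inv, norm_ofNat, inv_pow, Complex.norm_div, Complex.norm_mul, norm_I,
    norm_real, Real.norm_eq_abs, one_mul]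
  rw [div_pow, sq_abs]
  ring

/-- The boundary of the Robin indicatrix
`K_ρ = {z ∈ ℂⁿ : ∑|z_j|² + |∑ z_j²| ≤ 1/2}` of the real unit ball (`n ≥ 2`)
contains the nondegenerate segment `{(1/2, it/2, 0, …, 0) : t ∈ [−1,1]}`:
each such point satisfies `∑|z_j|² + |∑ z_j²| = 1/2` and lies on the frontier. -/
theorem robin_indicatrix_not_strictly_convex (n : ℕ) (t : ℝ) (ht : t ∈ Set.Icc (-1:ℝ) 1) :
    (∑ j : Fin (n + 2),
        ‖(fun j : Fin (n + 2) =>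
          if j = 0 then (1/2 : ℂ) else if j = 1 then Complex.I * t / 2 else 0) j‖ ^ 2
      + ‖∑ j : Fin (n + 2),
          ((fun j : Fin (n + 2) =>
            if j = 0 then (1/2 : ℂ) else if j = 1 then Complex.I * t / 2 else 0) j) ^ 2‖
      = 1/2)
    ∧ (fun j : Fin (n + 2) =>
        if j = 0 then (1/2 : ℂ) else if j = 1 then Complex.I * t / 2 else 0) ∈
      frontier {z : Fin (n + 2) → ℂ |
        ∑ j, ‖z j‖ ^ 2 + ‖∑ j, (z j) ^ 2‖ ≤ 1/2} := by
  have hlevel := robinIndicatrixFn_segment n ht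
  refine ⟨hlevel, ?_⟩
  refine mem_frontier_setOf_le_of_lt_smul (f := robinIndicatrixFn) hlevel fun c hc => ?_
  rw [robinIndicatrixFn_smul, hlevel]
  nlinarith
end

section
/- The set K_ρ = { z ∈ ℂⁿ : |z₁|² + ⋯ + |z_n|² + |z₁² + ⋯ + z_n²| ≤ 1/2 } is a convex, balanced (circled) subset of ℂⁿ, i.e., it is convex and t z ∈ K_ρ whenever z ∈ K_ρ and |t| ≤ 1. -/
/-!
For `‖u‖ = 1` one has `‖w‖² + Re (u² w²) = 2 (Re (u w))²`, so
`∑ ‖z j‖² + Re (u² ∑ z j²) = 2 ∑ (Re (u z j))²` is a sum of squares of real-linear forms, hence a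
convex function of `z`. These functions lie below `∑ ‖z j‖² + ‖∑ z j²‖`, and choosing `u² ∑ z j²`
real and nonnegative attains it, so the latter is convex as a pointwise maximum and its sublevel
sets are convex. It is homogeneous of degree two under complex scalars, which gives balancedness.
-/

open Complex Finset Set

section Convexity

variable {𝕜 E β ι : Type*} [Semiring 𝕜] [PartialOrder 𝕜] [AddCommMonoid E] [SMul 𝕜 E]
  [AddCommMonoid β] [PartialOrder β] [IsOrderedAddMonoid β] [Module 𝕜 β] {s : Set E}

theorem ConvexOn.fun_sum {t : Finset ι} {f : ι → E → β} (hs : Convex 𝕜 s)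
    (hf : ∀ i ∈ t, ConvexOn 𝕜 s (f i)) : ConvexOn 𝕜 s fun x ↦ ∑ i ∈ t, f i x := by
  classical
  induction t using Finset.induction_on with
  | empty => simpa using convexOn_const 0 hs
  | insert i t hi ih =>
    simp only [sum_insert hi]
    exact (hf i (mem_insert_self i t)).add (ih fun j hj ↦ hf j (mem_insert_of_mem hj))

theorem convexOn_of_le_of_exists_eq [PosSMulMono 𝕜 β] {f : E → β} {g : ι → E → β}
    (hs : Convex 𝕜 s) (hg : ∀ i, ConvexOn 𝕜 s (g i)) (hle : ∀ i, ∀ x ∈ s, g i x ≤ f x)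
    (heq : ∀ x ∈ s, ∃ i, g i x = f x) : ConvexOn 𝕜 s f := by
  refine ⟨hs, fun x hx y hy a b ha hb hab ↦ ?_⟩
  obtain ⟨i, hi⟩ := heq (a • x + b • y) (hs hx hy ha hb hab)
  calc f (a • x + b • y) = g i (a • x + b • y) := hi.symm
    _ ≤ a • g i x + b • g i y := (hg i).2 hx hy ha hb hab
    _ ≤ a • f x + b • f y := add_le_add (smul_le_smul_of_nonneg_left (hle i x hx) ha)
        (smul_le_smul_of_nonneg_left (hle i y hy) hb)

end Convexity

namespace Complex

theorem norm_sq_add_re_sq (z : ℂ) : ‖z‖ ^ 2 + (z ^ 2).re = 2 * z.re ^ 2 := by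
  rw [← normSq_eq_norm_sq, normSq_apply, sq, mul_re]
  ring

theorem norm_sq_add_re_mul_sq {u : ℂ} (hu : ‖u‖ = 1) (z : ℂ) :
    ‖z‖ ^ 2 + (u ^ 2 * z ^ 2).re = 2 * (u * z).re ^ 2 := by
  rw [← mul_pow, ← norm_sq_add_re_sq, norm_mul, hu, one_mul]

theorem exists_norm_eq_one_sq_mul_eq_norm (S : ℂ) : ∃ u : ℂ, ‖u‖ = 1 ∧ u ^ 2 * S = ‖S‖ := by
  refine ⟨exp (↑(-arg S / 2) * I), norm_exp_ofReal_mul_I _, ?_⟩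
  nth_rw 2 [← norm_mul_exp_arg_mul_I S]
  rw [← exp_nat_mul, mul_left_comm, ← exp_add,
    show ((2 : ℕ) : ℂ) * (↑(-arg S / 2) * I) + ↑(arg S) * I = 0 by push_cast; ring, exp_zero,
    mul_one]

end Complex

section Robin

variable {ι : Type*} [Fintype ι]

noncomputable def robinSq (z : ι → ℂ) : ℝ := ∑ j, ‖z j‖ ^ 2 + ‖∑ j, z j ^ 2‖

theorem robinSq_nonneg (z : ι → ℂ) : 0 ≤ robinSq z := by
  unfold robinSq; positivity

theorem robinSq_smul (t : ℂ) (z : ι → ℂ) : robinSq (t • z) = ‖t‖ ^ 2 * robinSq z := by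
  simp only [robinSq, Pi.smul_apply, smul_eq_mul, mul_pow, ← mul_sum, norm_mul, norm_pow]
  ring

theorem two_mul_sum_re_mul_sq {u : ℂ} (hu : ‖u‖ = 1) (z : ι → ℂ) :
    2 * ∑ j, (u * z j).re ^ 2 = ∑ j, ‖z j‖ ^ 2 + (u ^ 2 * ∑ j, z j ^ 2).re := by
  simp only [mul_sum, re_sum, ← sum_add_distrib, norm_sq_add_re_mul_sq hu]

theorem convexOn_sum_re_mul_sq (u : ℂ) :
    ConvexOn ℝ univ fun z : ι → ℂ ↦ ∑ j, (u * z j).re ^ 2 :=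
  ConvexOn.fun_sum convex_univ fun j _ ↦
    ((Even.convexOn_pow (𝕜 := ℝ) even_two).comp_linearMap
      (reLm.comp ((LinearMap.mulLeft ℝ u).comp (LinearMap.proj (R := ℝ) (φ := fun _ : ι ↦ ℂ) j))))

theorem two_mul_sum_re_mul_sq_le_robinSq {u : ℂ} (hu : ‖u‖ = 1) (z : ι → ℂ) :
    2 * ∑ j, (u * z j).re ^ 2 ≤ robinSq z := by
  rw [two_mul_sum_re_mul_sq hu, robinSq]
  gcongr
  calc (u ^ 2 * ∑ j, z j ^ 2).re ≤ ‖u ^ 2 * ∑ j, z j ^ 2‖ := re_le_norm _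
    _ = ‖∑ j, z j ^ 2‖ := by rw [norm_mul, norm_pow, hu, one_pow, one_mul]

theorem exists_two_mul_sum_re_mul_sq_eq_robinSq (z : ι → ℂ) :
    ∃ u : ℂ, ‖u‖ = 1 ∧ 2 * ∑ j, (u * z j).re ^ 2 = robinSq z := by
  obtain ⟨u, hu, hS⟩ := exists_norm_eq_one_sq_mul_eq_norm (∑ j, z j ^ 2)
  exact ⟨u, hu, by rw [two_mul_sum_re_mul_sq hu, hS, ofReal_re, robinSq]⟩

theorem convexOn_robinSq : ConvexOn ℝ univ (robinSq : (ι → ℂ) → ℝ) :=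
  convexOn_of_le_of_exists_eq
    (g := fun (u : {u : ℂ // ‖u‖ = 1}) (z : ι → ℂ) ↦ 2 * ∑ j, (u.1 * z j).re ^ 2) convex_univ
    (fun u ↦ (convexOn_sum_re_mul_sq u.1).smul zero_le_two)
    (fun u z _ ↦ two_mul_sum_re_mul_sq_le_robinSq u.2 z)
    (fun z _ ↦ let ⟨u, hu, h⟩ := exists_two_mul_sum_re_mul_sq_eq_robinSq z; ⟨⟨u, hu⟩, h⟩)

end Robin

/-- The Robin indicatrix `K_ρ = {z ∈ ℂⁿ : ∑|z_j|² + |∑ z_j²| ≤ 1/2}` of the real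
unit ball is convex (as a subset of the real vector space `ℂⁿ`) and balanced. -/
theorem robin_indicatrix_convex_balanced (n : ℕ) :
    Convex ℝ {z : Fin n → ℂ |
        ∑ j, ‖z j‖ ^ 2 + ‖∑ j, (z j) ^ 2‖ ≤ 1/2}
    ∧ ∀ z ∈ {z : Fin n → ℂ |
        ∑ j, ‖z j‖ ^ 2 + ‖∑ j, (z j) ^ 2‖ ≤ 1/2},
      ∀ t : ℂ, ‖t‖ ≤ 1 →
        t • z ∈ {z : Fin n → ℂ |
          ∑ j, ‖z j‖ ^ 2 + ‖∑ j, (z j) ^ 2‖ ≤ 1/2} := by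
  refine ⟨?_, fun z hz t ht ↦ ?_⟩
  · have h := (convexOn_robinSq (ι := Fin n)).convex_le (1 / 2)
    rwa [sep_univ] at h
  · change robinSq (t • z) ≤ 1 / 2
    calc robinSq (t • z) = ‖t‖ ^ 2 * robinSq z := robinSq_smul t z
      _ ≤ robinSq z := mul_le_of_le_one_left (robinSq_nonneg z) (pow_le_one₀ (norm_nonneg t) ht)
      _ ≤ 1 / 2 := hz
end
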